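/- Let P₀ be a probability measure on ℝ^d whose support is contained in the closed ball of radius R centered at the origin, and let p_t denote the isotropic forward Ornstein–Uhlenbeck marginal density started from P₀. Then for every δ > 0, every t ≥ δ, and every x ∈ ℝ^d, |∇ log p_t(x) + (1−e^{−t})^{−1} x| ≤ (R/(1−e^{−δ})) e^{−t/2}. (Gradient bound of Corollary 3.9 for bounded-support targets with early stopping.) -/

import Mathlib

/-!
Up to a constant factor, `p_t` is a mixture of Gaussian kernels of variance `s = 1 - e^{-t}`
centred at the points `e^{-t/2} y`, `y ∼ P₀`. Differentiating under the integral gives Tweedie's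
formula `∇ log p_t(x) = (m(x) - x) / s`, where `m(x)` is the posterior mean of the centre given
`x`. Being an average of centres of norm at most `e^{-t/2} R`, `m(x)` has norm at most
`e^{-t/2} R`, and `s ≥ 1 - e^{-δ}` for `t ≥ δ`.
-/

open MeasureTheory Real

noncomputable section

/-- Marginal density at time `t > 0` of the isotropic forward Ornstein–Uhlenbeck
process started from the probability measure `P₀`. -/
def ouDensityIso {d : ℕ} (P₀ : Measure (EuclideanSpace ℝ (Fin d)))
    (t : ℝ) (x : EuclideanSpace ℝ (Fin d)) : ℝ :=
  (2 * π * (1 - Real.exp (-t))) ^ (-(d : ℝ) / 2) *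
    ∫ y, Real.exp (-‖x - Real.exp (-t / 2) • y‖ ^ 2 / (2 * (1 - Real.exp (-t)))) ∂P₀

theorem HasGradientAt.const_add {E : Type*} [NormedAddCommGroup E] [InnerProductSpace ℝ E]
    [CompleteSpace E] {f : E → ℝ} {f' x : E} (hf : HasGradientAt f f' x) (c : ℝ) :
    HasGradientAt (fun y => c + f y) f' x :=
  hasGradientAt_iff_hasFDerivAt.2 ((hasGradientAt_iff_hasFDerivAt.1 hf).const_add c)

theorem HasGradientAt.log {E : Type*} [NormedAddCommGroup E] [InnerProductSpace ℝ E]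
    [CompleteSpace E] {f : E → ℝ} {f' x : E} (hf : HasGradientAt f f' x) (hx : f x ≠ 0) :
    HasGradientAt (fun y => Real.log (f y)) ((f x)⁻¹ • f') x := by
  rw [hasGradientAt_iff_hasFDerivAt, map_smul]
  exact (hasGradientAt_iff_hasFDerivAt.1 hf).log hx

theorem norm_integral_smul_le_mul_integral {α F : Type*} [MeasurableSpace α] [NormedAddCommGroup F]
    [NormedSpace ℝ F] {μ : Measure α} {w : α → ℝ} {g : α → F} {M : ℝ}
    (hw_nonneg : ∀ y, 0 ≤ w y) (hw : Integrable w μ) (hg : ∀ᵐ y ∂μ, ‖g y‖ ≤ M) :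
    ‖∫ y, w y • g y ∂μ‖ ≤ M * ∫ y, w y ∂μ := by
  rw [← integral_const_mul]
  refine norm_integral_le_of_norm_le (hw.const_mul M) ?_
  filter_upwards [hg] with y hy
  rw [norm_smul, Real.norm_of_nonneg (hw_nonneg y), mul_comm]
  exact mul_le_mul_of_nonneg_right hy (hw_nonneg y)

section GaussianMixture

variable {α E : Type*} [MeasurableSpace α] [NormedAddCommGroup E]

def gaussianKernel (s : ℝ) (c z : E) : ℝ :=
  exp (-‖z - c‖ ^ 2 / (2 * s))

theorem gaussianKernel_pos (s : ℝ) (c z : E) : 0 < gaussianKernel s c z :=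
  exp_pos _

theorem gaussianKernel_le_one {s : ℝ} (hs : 0 ≤ s) (c z : E) : gaussianKernel s c z ≤ 1 :=
  exp_le_one_iff.2 <| div_nonpos_of_nonpos_of_nonneg (neg_nonpos.2 (sq_nonneg _)) (by positivity)

theorem integrable_gaussianKernel {μ : Measure α} [IsFiniteMeasure μ] {c : α → E}
    (hc : AEStronglyMeasurable c μ) {s : ℝ} (hs : 0 ≤ s) (z : E) :
    Integrable (fun y => gaussianKernel s (c y) z) μ := by
  refine .of_bound ?_ 1 (ae_of_all _ fun y => ?_)
  · unfold gaussianKernel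
    fun_prop
  · rw [Real.norm_of_nonneg (gaussianKernel_pos s _ z).le]
    exact gaussianKernel_le_one hs _ z

def gaussianMixture (μ : Measure α) (c : α → E) (s : ℝ) (z : E) : ℝ :=
  ∫ y, gaussianKernel s (c y) z ∂μ

theorem gaussianMixture_pos {μ : Measure α} [IsFiniteMeasure μ] [NeZero μ] {c : α → E}
    (hc : AEStronglyMeasurable c μ) {s : ℝ} (hs : 0 ≤ s) (z : E) :
    0 < gaussianMixture μ c s z := by
  refine (integral_pos_iff_support_of_nonneg (fun y => (gaussianKernel_pos s (c y) z).le)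
    (integrable_gaussianKernel hc hs z)).2 ?_
  simp [Function.support, (gaussianKernel_pos _ _ _).ne', NeZero.ne μ]

variable [InnerProductSpace ℝ E]

/-- The posterior mean of the centre `c y` given the observation `z`, when `y ∼ μ` and `z` is
Gaussian around `c y` with variance `s`. -/
def gaussianPosteriorMean (μ : Measure α) (c : α → E) (s : ℝ) (z : E) : E :=
  (gaussianMixture μ c s z)⁻¹ • ∫ y, gaussianKernel s (c y) z • c y ∂μ

theorem integrable_gaussianKernel_smul {μ : Measure α} [IsFiniteMeasure μ] {c : α → E}
    (hc : AEStronglyMeasurable c μ) {M : ℝ} (hcM : ∀ᵐ y ∂μ, ‖c y‖ ≤ M) {s : ℝ} (hs : 0 ≤ s)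
    (z : E) : Integrable (fun y => gaussianKernel s (c y) z • c y) μ := by
  refine .of_bound ?_ M ?_
  · unfold gaussianKernel
    fun_prop
  · filter_upwards [hcM] with y hy
    rw [norm_smul, Real.norm_of_nonneg (gaussianKernel_pos s (c y) z).le]
    exact (mul_le_of_le_one_left (norm_nonneg _) (gaussianKernel_le_one hs (c y) z)).trans hy

theorem norm_gaussianPosteriorMean_le {μ : Measure α} [IsFiniteMeasure μ] [NeZero μ] {c : α → E}
    (hc : AEStronglyMeasurable c μ) {M : ℝ} (hcM : ∀ᵐ y ∂μ, ‖c y‖ ≤ M) {s : ℝ} (hs : 0 ≤ s)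
    (z : E) : ‖gaussianPosteriorMean μ c s z‖ ≤ M := by
  have hpos := gaussianMixture_pos hc hs z
  rw [gaussianPosteriorMean, norm_smul, norm_inv, Real.norm_of_nonneg hpos.le,
    inv_mul_le_iff₀ hpos, mul_comm]
  exact norm_integral_smul_le_mul_integral (fun y => (gaussianKernel_pos s (c y) z).le)
    (integrable_gaussianKernel hc hs z) hcM

variable [CompleteSpace E]

theorem hasGradientAt_gaussianKernel (s : ℝ) (c z : E) :
    HasGradientAt (gaussianKernel s c) ((s⁻¹ * gaussianKernel s c z) • (c - z)) z := by
  have hsq : HasFDerivAt (fun w : E => ‖w - c‖ ^ 2) (2 • innerSL ℝ (z - c)) z := by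
    simpa using ((hasFDerivAt_id z).sub_const c).norm_sq
  rw [hasGradientAt_iff_hasFDerivAt]
  refine ((hsq.const_mul (-(2 * s)⁻¹)).exp.congr_fderiv ?_).congr_of_eventuallyEq
    (Filter.Eventually.of_forall fun w => ?_)
  · ext w
    simp only [gaussianKernel, InnerProductSpace.toDual_apply_apply, smul_apply,
      innerSL_apply_apply, real_inner_smul_left, smul_eq_mul, mul_inv, ← neg_sub z c,
      inner_neg_left]
    ring_nf
  · simp only [gaussianKernel]
    ring_nf

theorem hasGradientAt_gaussianMixture {μ : Measure α} [IsFiniteMeasure μ] {c : α → E}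
    (hc : AEStronglyMeasurable c μ) {M : ℝ} (hcM : ∀ᵐ y ∂μ, ‖c y‖ ≤ M) {s : ℝ} (hs : 0 < s)
    (z : E) :
    HasGradientAt (gaussianMixture μ c s)
      (∫ y, (s⁻¹ * gaussianKernel s (c y) z) • (c y - z) ∂μ) z := by
  have hdual :
      ∫ y, InnerProductSpace.toDual ℝ E ((s⁻¹ * gaussianKernel s (c y) z) • (c y - z)) ∂μ =
        InnerProductSpace.toDual ℝ E (∫ y, (s⁻¹ * gaussianKernel s (c y) z) • (c y - z) ∂μ) :=
    (InnerProductSpace.toDual ℝ E).toLinearIsometry.integral_comp_comm _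
  rw [hasGradientAt_iff_hasFDerivAt, ← hdual]
  refine hasFDerivAt_integral_of_dominated_of_fderiv_le (Metric.ball_mem_nhds z one_pos)
    (bound := fun _ => s⁻¹ * (‖z‖ + 1 + M))
    (.of_forall fun w => (integrable_gaussianKernel hc hs.le w).aestronglyMeasurable)
    (integrable_gaussianKernel hc hs.le z) ?_ ?_ (integrable_const _)
    (ae_of_all _ fun y w _ =>
      hasGradientAt_iff_hasFDerivAt.1 (hasGradientAt_gaussianKernel s (c y) w))
  · refine (InnerProductSpace.toDual ℝ E).toLinearIsometry.continuous.comp_aestronglyMeasurable ?_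
    unfold gaussianKernel
    fun_prop
  · filter_upwards [hcM] with y hy w hw
    have hw' : ‖w‖ ≤ ‖z‖ + 1 := by
      have := norm_le_norm_add_norm_sub' w z
      rw [← dist_eq_norm] at this
      linarith [Metric.mem_ball.1 hw]
    have hk := gaussianKernel_le_one hs.le (c y) w
    rw [LinearIsometryEquiv.norm_map, norm_smul,
      Real.norm_of_nonneg (mul_pos (inv_pos.2 hs) (gaussianKernel_pos s (c y) w)).le]
    calc s⁻¹ * gaussianKernel s (c y) w * ‖c y - w‖ ≤ s⁻¹ * 1 * (‖c y‖ + ‖w‖) := by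
          gcongr
          exact norm_sub_le _ _
      _ ≤ s⁻¹ * (‖z‖ + 1 + M) := by
          rw [mul_one]
          exact mul_le_mul_of_nonneg_left (by linarith) (inv_pos.2 hs).le

/-- Tweedie's formula. -/
theorem hasGradientAt_log_gaussianMixture {μ : Measure α} [IsFiniteMeasure μ] [NeZero μ]
    {c : α → E} (hc : AEStronglyMeasurable c μ) {M : ℝ} (hcM : ∀ᵐ y ∂μ, ‖c y‖ ≤ M) {s : ℝ}
    (hs : 0 < s) (z : E) :
    HasGradientAt (fun z => log (gaussianMixture μ c s z))
      (s⁻¹ • (gaussianPosteriorMean μ c s z - z)) z := by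
  have hpos := gaussianMixture_pos hc hs.le z
  have hint : ∫ y, (s⁻¹ * gaussianKernel s (c y) z) • (c y - z) ∂μ
      = s⁻¹ • (∫ y, gaussianKernel s (c y) z • c y ∂μ - gaussianMixture μ c s z • z) := by
    rw [gaussianMixture, ← integral_smul_const, ← integral_sub
      (integrable_gaussianKernel_smul hc hcM hs.le z)
      ((integrable_gaussianKernel hc hs.le z).smul_const z), ← integral_smul]
    simp_rw [mul_smul, smul_sub]
  convert (hasGradientAt_gaussianMixture hc hcM hs z).log hpos.ne' using 1
  rw [hint, gaussianPosteriorMean, smul_comm _ s⁻¹]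
  congr 1
  rw [smul_sub, smul_smul, inv_mul_cancel₀ hpos.ne', one_smul]

end GaussianMixture

/-- Gradient bound of Corollary 3.9 for bounded-support targets with early stopping. -/
theorem stmt7 {d : ℕ}
    (P₀ : Measure (EuclideanSpace ℝ (Fin d))) [IsProbabilityMeasure P₀]
    (R : ℝ)
    (hsupp : P₀ (Metric.closedBall (0 : EuclideanSpace ℝ (Fin d)) R)ᶜ = 0)
    (δ : ℝ) (hδ : 0 < δ) (t : ℝ) (ht : δ ≤ t) (x : EuclideanSpace ℝ (Fin d)) :
    ‖gradient (fun z => Real.log (ouDensityIso P₀ t z)) x + (1 - Real.exp (-t))⁻¹ • x‖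
      ≤ R / (1 - Real.exp (-δ)) * Real.exp (-t / 2) := by
  set s := 1 - exp (-t)
  set a := exp (-t / 2)
  have hδ' : 0 < 1 - exp (-δ) := sub_pos.2 (exp_lt_one_iff.2 (neg_lt_zero.2 hδ))
  have hδs : 1 - exp (-δ) ≤ s := sub_le_sub_left (exp_le_exp.2 (neg_le_neg ht)) 1
  have hs : 0 < s := hδ'.trans_le hδs
  have hball : ∀ᵐ y ∂P₀, ‖y‖ ≤ R := by
    filter_upwards [mem_ae_iff.2 hsupp] with y hy
    simpa using hy
  have hR : 0 ≤ R := by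
    obtain ⟨y, hy⟩ := hball.exists
    exact (norm_nonneg y).trans hy
  have hcentres : ∀ᵐ y ∂P₀, ‖a • y‖ ≤ a * R := by
    filter_upwards [hball] with y hy
    rw [norm_smul, Real.norm_of_nonneg (exp_pos _).le]
    exact mul_le_mul_of_nonneg_left hy (exp_pos _).le
  have hmeas : AEStronglyMeasurable (fun y : EuclideanSpace ℝ (Fin d) => a • y) P₀ := by fun_prop
  have hnorm : (2 * π * s) ^ (-(d : ℝ) / 2) ≠ 0 := (rpow_pos_of_pos (by positivity) _).ne'
  have hlog : (fun z => log (ouDensityIso P₀ t z)) = fun z =>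
      log ((2 * π * s) ^ (-(d : ℝ) / 2)) + log (gaussianMixture P₀ (a • ·) s z) :=
    funext fun z => log_mul hnorm (gaussianMixture_pos hmeas hs.le z).ne'
  rw [hlog, ((hasGradientAt_log_gaussianMixture hmeas hcentres hs x).const_add _).gradient,
    smul_sub, sub_add_cancel, norm_smul, Real.norm_of_nonneg (inv_pos.2 hs).le]
  calc s⁻¹ * ‖gaussianPosteriorMean P₀ (a • ·) s x‖ ≤ s⁻¹ * (a * R) :=
        mul_le_mul_of_nonneg_left (norm_gaussianPosteriorMean_le hmeas hcentres hs.le x)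
          (inv_pos.2 hs).le
    _ = R / s * a := by ring
    _ ≤ R / (1 - exp (-δ)) * a := by gcongr
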